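/- arXiv:0709.3752 — 2 statements merged into one kernel-verified Lean document; each statement's English description precedes it below -/
import Mathlib

section
/- Let T be a positive trace-class operator on a Hilbert space H, and let {h_k}_{k∈J} be a frame for H with frame bounds A, B > 0 (i.e., A‖f‖² ≤ Σ_k |⟨f, h_k⟩|² ≤ B‖f‖² for all f ∈ H). Then (1/B) Σ_k ⟨T h_k, h_k⟩ ≤ tr T ≤ (1/A) Σ_k ⟨T h_k, h_k⟩. -/
open scoped ComplexInnerProductSpace

/-! Writing `T = ∑ⱼ λⱼ ⟪φⱼ, ·⟫ φⱼ`, one has `re ⟪T f, f⟫ = ∑ⱼ λⱼ ‖⟪φⱼ, f⟫‖²`. Summing over the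
frame and exchanging the two sums of nonnegative terms gives
`∑ₖ re ⟪T hₖ, hₖ⟫ = ∑ⱼ λⱼ ∑ₖ ‖⟪φⱼ, hₖ⟫‖²`, and the frame inequality at the unit vectors `φⱼ`
puts every inner sum in `[A, B]`. -/

universe u v w

section Orthonormal

variable {𝕜 : Type u} {E : Type v} {ι : Type w} [RCLike 𝕜] [NormedAddCommGroup E]
  [InnerProductSpace 𝕜 E] {φ : ι → E}

theorem Orthonormal.summable_smul_inner_smul [CompleteSpace E] (hφ : Orthonormal 𝕜 φ)
    {c : ι → 𝕜} {C : ℝ} (hc : ∀ i, ‖c i‖ ≤ C) (f : E) :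
    Summable fun i ↦ c i • (inner 𝕜 (φ i) f • φ i) := by
  have hiff := hφ.orthogonalFamily.summable_iff_norm_sq_summable fun i ↦ c i * inner 𝕜 (φ i) f
  simp only [LinearIsometry.toSpanSingleton_apply] at hiff
  simp_rw [smul_smul, hiff, norm_mul, mul_pow]
  refine Summable.of_nonneg_of_le (fun i ↦ by positivity) (fun i ↦ ?_)
    ((hφ.inner_products_summable f).mul_left (C ^ 2))
  have hC : 0 ≤ C := (norm_nonneg (c i)).trans (hc i)
  gcongr
  exact hc i

open RCLike in
theorem Orthonormal.re_inner_tsum_smul_inner_smul [CompleteSpace E] (hφ : Orthonormal 𝕜 φ)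
    {c : ι → ℝ} {C : ℝ} (hc : ∀ i, |c i| ≤ C) (f : E) :
    re (inner 𝕜 (∑' i, (c i : 𝕜) • (inner 𝕜 (φ i) f • φ i)) f) =
      ∑' i, c i * ‖inner 𝕜 (φ i) f‖ ^ 2 := by
  have hS := (hφ.summable_smul_inner_smul (c := fun i ↦ (c i : 𝕜)) (C := C)
    (fun i ↦ by simpa using hc i) f).hasSum.mapL (innerSL 𝕜 f)
  rw [← inner_conj_symm, conj_re]
  refine (RCLike.hasSum_re 𝕜 hS).tsum_eq.symm.trans (tsum_congr fun i ↦ ?_)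
  simp only [innerSL_apply_apply, inner_smul_right]
  rw [re_ofReal_mul, ← inner_conj_symm f (φ i), RCLike.mul_conj, ← ofReal_pow,
    ofReal_re]

theorem summable_of_tsum_ne_zero {ι M : Type*} [AddCommMonoid M] [TopologicalSpace M] {g : ι → M}
    (h : ∑' i, g i ≠ 0) : Summable g := by
  by_contra hg
  exact h (tsum_eq_zero_of_not_summable hg)

theorem tsum_comm_of_nonneg {α β : Type*} {f : α → β → ℝ} (hf : ∀ a b, 0 ≤ f a b)
    (hrow : ∀ a, Summable (f a)) (hsum : Summable fun a ↦ ∑' b, f a b) :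
    ∑' b, ∑' a, f a b = ∑' a, ∑' b, f a b :=
  ((summable_prod_of_nonneg fun p ↦ hf p.1 p.2).2 ⟨hrow, hsum⟩).tsum_comm

section WeightedSum

variable {ι : Type u} {w S : ι → ℝ} {A B : ℝ}

theorem Summable.mul_of_nonneg_of_le (hw : ∀ i, 0 ≤ w i) (hsum : Summable w)
    (hS₀ : ∀ i, 0 ≤ S i) (hSB : ∀ i, S i ≤ B) : Summable fun i ↦ w i * S i :=
  .of_nonneg_of_le (fun i ↦ mul_nonneg (hw i) (hS₀ i))
    (fun i ↦ mul_le_mul_of_nonneg_left (hSB i) (hw i)) (hsum.mul_right B)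

theorem mul_tsum_le_tsum_mul (hw : ∀ i, 0 ≤ w i) (hsum : Summable w) (hAS : ∀ i, A ≤ S i)
    (hwS : Summable fun i ↦ w i * S i) : A * ∑' i, w i ≤ ∑' i, w i * S i := by
  rw [← tsum_mul_left]
  exact (hsum.mul_left A).tsum_le_tsum (fun i ↦ by nlinarith [hw i, hAS i]) hwS

theorem tsum_mul_le_mul_tsum (hw : ∀ i, 0 ≤ w i) (hsum : Summable w) (hSB : ∀ i, S i ≤ B)
    (hwS : Summable fun i ↦ w i * S i) : ∑' i, w i * S i ≤ B * ∑' i, w i := by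
  rw [← tsum_mul_left]
  exact hwS.tsum_le_tsum (fun i ↦ by nlinarith [hw i, hSB i]) (hsum.mul_left B)

end WeightedSum

/-- Trace-frame inequality: if `T` is a positive trace-class operator given by its
spectral decomposition `T f = ∑ λⱼ ⟨f, φⱼ⟩ φⱼ` (orthonormal `φ`, `λⱼ ≥ 0`, `∑ λⱼ < ∞`,
so `tr T = ∑ λⱼ`), and `{h k}` is a frame with bounds `A, B > 0`, then
`B⁻¹ ∑ₖ ⟨T hₖ, hₖ⟩ ≤ tr T ≤ A⁻¹ ∑ₖ ⟨T hₖ, hₖ⟩`. -/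
theorem trace_frame_inequality
    {H : Type*} [NormedAddCommGroup H] [InnerProductSpace ℂ H] [CompleteSpace H]
    {J K : Type*} (h : J → H) (A B : ℝ) (hA : 0 < A) (hB : 0 < B)
    (hframe : ∀ f : H, A * ‖f‖ ^ 2 ≤ (∑' k : J, ‖⟪f, h k⟫‖ ^ 2) ∧
      (∑' k : J, ‖⟪f, h k⟫‖ ^ 2) ≤ B * ‖f‖ ^ 2)
    (φ : K → H) (hφ : Orthonormal ℂ φ) (lam : K → ℝ) (hlam : ∀ j, 0 ≤ lam j)
    (hsum : Summable lam)
    (T : H →L[ℂ] H)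
    (hT : ∀ f : H, T f = ∑' j : K, (lam j : ℂ) • (⟪φ j, f⟫ • φ j)) :
    (1 / B) * (∑' k : J, (⟪T (h k), h k⟫).re) ≤ (∑' j : K, lam j) ∧
      (∑' j : K, lam j) ≤ (1 / A) * (∑' k : J, (⟪T (h k), h k⟫).re) := by
  set S : K → ℝ := fun j ↦ ∑' k, ‖⟪φ j, h k⟫‖ ^ 2
  have hS : ∀ j, A ≤ S j ∧ S j ≤ B := fun j ↦ by simpa [hφ.1 j] using hframe (φ j)
  -- `∑'` of a divergent series is `0`, which the lower frame bound `0 < A ≤ S j` excludes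
  have hrow : ∀ j, Summable fun k ↦ ‖⟪φ j, h k⟫‖ ^ 2 :=
    fun j ↦ summable_of_tsum_ne_zero (hA.trans_le (hS j).1).ne'
  have hlamS : Summable fun j ↦ lam j * S j :=
    hsum.mul_of_nonneg_of_le hlam (fun j ↦ hA.le.trans (hS j).1) (fun j ↦ (hS j).2)
  have hdiag : ∀ k, (⟪T (h k), h k⟫).re = ∑' j, lam j * ‖⟪φ j, h k⟫‖ ^ 2 := fun k ↦ by
    rw [hT]
    exact hφ.re_inner_tsum_smul_inner_smul
      (fun j ↦ (abs_of_nonneg (hlam j)).le.trans (hsum.le_tsum j fun i _ ↦ hlam i)) (h k)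
  have hswap : ∑' k, (⟪T (h k), h k⟫).re = ∑' j, lam j * S j := by
    simp_rw [hdiag, S, ← tsum_mul_left]
    exact tsum_comm_of_nonneg (fun j _ ↦ mul_nonneg (hlam j) (sq_nonneg _))
      (fun j ↦ (hrow j).mul_left _) (by simpa only [tsum_mul_left] using hlamS)
  rw [hswap, one_div, one_div, inv_mul_le_iff₀ hB, le_inv_mul_iff₀ hA]
  exact ⟨tsum_mul_le_mul_tsum hlam hsum (fun j ↦ (hS j).2) hlamS,
    mul_tsum_le_tsum_mul hlam hsum (fun j ↦ (hS j).1) hlamS⟩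
end Orthonormal
end

section
/- Comparison estimate (abstract core): Let H be a Hilbert space, P, Q orthogonal projections with Q of finite rank, and let {e_k}_{k∈F} be a finite family of vectors in the range of Q, each of norm r > 0, satisfying the Bessel inequality Σ_{k∈F} |⟨f, e_k⟩|² ≤ B‖f‖² for all f ∈ H. Suppose moreover ‖e_k − P e_k‖ ≤ ε r for all k ∈ F, where 0 ≤ ε < 1. Then (r²/B)(1 − ε)·card(F) ≤ rank P. -/
/-!
Write `V` for the range of `P`. Since `P` is an orthogonal projection,
`‖P e‖² = re ⟪P e, e⟫ = ‖e‖² - re ⟪e - P e, e⟫ ≥ r² - ε r²` by Cauchy–Schwarz, so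
`Σ_k ‖P e_k‖² ≥ (1 - ε) r² card F`. Expanding `‖P e_k‖²` in an orthonormal basis `(b_j)` of `V`
and exchanging the sums gives `Σ_k ‖P e_k‖² = Σ_j Σ_k |⟪b_j, e_k⟫|² ≤ B dim V` by the Bessel
inequality applied to each `b_j`.
-/

open scoped ComplexInnerProductSpace

open scoped InnerProductSpace
open Module RCLike

namespace IsStarProjection

variable {𝕜 E : Type*} [RCLike 𝕜] [NormedAddCommGroup E] [InnerProductSpace 𝕜 E]
  [CompleteSpace E] {P : E →L[𝕜] E}

lemma apply_apply (hP : IsStarProjection P) (x : E) : P (P x) = P x :=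
  congr($hP.isIdempotentElem x)

lemma inner_apply_left (hP : IsStarProjection P) (x y : E) : ⟪P x, y⟫_𝕜 = ⟪x, P y⟫_𝕜 :=
  hP.isSelfAdjoint.isSymmetric x y

lemma norm_apply_sq (hP : IsStarProjection P) (x : E) : ‖P x‖ ^ 2 = re ⟪P x, x⟫_𝕜 :=
  calc ‖P x‖ ^ 2 = re ⟪P x, P x⟫_𝕜 := (inner_self_eq_norm_sq _).symm
    _ = re ⟪P x, x⟫_𝕜 := by rw [← hP.inner_apply_left, hP.apply_apply]

lemma norm_sq_sub_mul_norm_sub_le_norm_apply_sq (hP : IsStarProjection P) (x : E) :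
    ‖x‖ ^ 2 - ‖x‖ * ‖x - P x‖ ≤ ‖P x‖ ^ 2 := by
  have hsplit : re ⟪P x, x⟫_𝕜 = ‖x‖ ^ 2 - re ⟪x - P x, x⟫_𝕜 := by
    rw [inner_sub_left, map_sub, ← inner_self_eq_norm_sq (𝕜 := 𝕜)]
    ring
  rw [hP.norm_apply_sq, hsplit, mul_comm]
  linarith [re_inner_le_norm (𝕜 := 𝕜) (x - P x) x]

lemma norm_apply_sq_eq_sum {ι : Type*} [Fintype ι] (hP : IsStarProjection P)
    (b : OrthonormalBasis ι 𝕜 (LinearMap.range (P : E →ₗ[𝕜] E))) (x : E) :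
    ‖P x‖ ^ 2 = ∑ j, ‖⟪(b j : E), x⟫_𝕜‖ ^ 2 := by
  have hb : ∀ j, P (b j : E) = b j := fun j => by
    obtain ⟨y, hy⟩ := (b j).2
    rw [← hy]
    exact hP.apply_apply y
  have hparseval := b.sum_sq_norm_inner_right ⟨P x, LinearMap.mem_range_self _ x⟩
  simp only [Submodule.coe_inner, Submodule.coe_norm] at hparseval
  rw [← hparseval]
  congr! 3 with j
  rw [← hP.inner_apply_left, hb]

lemma sum_norm_apply_sq_le_of_bessel {F : Type*} [Fintype F] (hP : IsStarProjection P)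
    [FiniteDimensional 𝕜 (LinearMap.range (P : E →ₗ[𝕜] E))] {e : F → E} {B : ℝ}
    (hbessel : ∀ f : E, ∑ k, ‖⟪f, e k⟫_𝕜‖ ^ 2 ≤ B * ‖f‖ ^ 2) :
    ∑ k, ‖P (e k)‖ ^ 2 ≤ B * finrank 𝕜 (LinearMap.range (P : E →ₗ[𝕜] E)) := by
  let b := stdOrthonormalBasis 𝕜 (LinearMap.range (P : E →ₗ[𝕜] E))
  have hb : ∀ j, ‖(b j : E)‖ = 1 := b.norm_eq_one
  calc ∑ k, ‖P (e k)‖ ^ 2 = ∑ j, ∑ k, ‖⟪(b j : E), e k⟫_𝕜‖ ^ 2 := by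
        simp_rw [hP.norm_apply_sq_eq_sum b]
        exact Finset.sum_comm
    _ ≤ ∑ j, B * ‖(b j : E)‖ ^ 2 := Finset.sum_le_sum fun j _ => hbessel _
    _ = B * finrank 𝕜 (LinearMap.range (P : E →ₗ[𝕜] E)) := by simp [hb, mul_comm]

end IsStarProjection

theorem comparison_core_general
    {H : Type*} [NormedAddCommGroup H] [InnerProductSpace ℂ H] [CompleteSpace H]
    (P : H →L[ℂ] H)
    (hP_proj : P ∘L P = P) (hP_sa : IsSelfAdjoint P)
    {F : Type*} [Fintype F] (e : F → H) (r B ε : ℝ)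
    (hB : 0 < B)
    (hnorm : ∀ k : F, ‖e k‖ = r)
    (hbessel : ∀ f : H, (∑ k : F, ‖⟪f, e k⟫‖ ^ 2) ≤ B * ‖f‖ ^ 2)
    (happrox : ∀ k : F, ‖e k - P (e k)‖ ≤ ε * r) :
    ∀ n : ℕ, Module.rank ℂ (LinearMap.range (P : H →ₗ[ℂ] H)) ≤ n →
      (r ^ 2 / B) * (1 - ε) * (Fintype.card F : ℝ) ≤ n := by
  intro n hn
  have hP : IsStarProjection P := ⟨hP_proj, hP_sa⟩
  have : FiniteDimensional ℂ (LinearMap.range (P : H →ₗ[ℂ] H)) :=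
    Module.rank_lt_aleph0_iff.mp (hn.trans_lt Cardinal.natCast_lt_aleph0)
  have hfinrank : (finrank ℂ (LinearMap.range (P : H →ₗ[ℂ] H)) : ℝ) ≤ n := by
    exact_mod_cast Module.finrank_le_of_rank_le hn
  have hlower : ∀ k, r ^ 2 * (1 - ε) ≤ ‖P (e k)‖ ^ 2 := fun k => by
    have hPe := hP.norm_sq_sub_mul_norm_sub_le_norm_apply_sq (e k)
    have hr : r * ‖e k - P (e k)‖ ≤ r * (ε * r) :=
      mul_le_mul_of_nonneg_left (happrox k) (hnorm k ▸ norm_nonneg _)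
    rw [hnorm k] at hPe
    linarith
  rw [div_mul_eq_mul_div, div_mul_eq_mul_div, div_le_iff₀ hB]
  calc r ^ 2 * (1 - ε) * Fintype.card F = ∑ _k : F, r ^ 2 * (1 - ε) := by simp [mul_comm]
    _ ≤ ∑ k, ‖P (e k)‖ ^ 2 := Finset.sum_le_sum fun k _ => hlower k
    _ ≤ B * finrank ℂ (LinearMap.range (P : H →ₗ[ℂ] H)) :=
        hP.sum_norm_apply_sq_le_of_bessel hbessel
    _ ≤ n * B := by rw [mul_comm]; gcongr

/-- Abstract core of the comparison theorem: if `P, Q` are orthogonal projections with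
`Q` of finite rank, `{e_k}_{k∈F}` is a finite family of vectors of norm `r > 0` in the
range of `Q` satisfying the Bessel inequality with bound `B`, and
`‖e_k − P e_k‖ ≤ ε r` with `0 ≤ ε < 1`, then `(r²/B)(1−ε)·card F ≤ rank P`
(phrased as: whenever `rank P ≤ n`, the left side is at most `n`). -/
theorem comparison_core
    {H : Type*} [NormedAddCommGroup H] [InnerProductSpace ℂ H] [CompleteSpace H]
    (P Q : H →L[ℂ] H)
    (hP_proj : P ∘L P = P) (hP_sa : IsSelfAdjoint P)
    (hQ_proj : Q ∘L Q = Q) (hQ_sa : IsSelfAdjoint Q)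
    (hQ_rank : FiniteDimensional ℂ (LinearMap.range (Q : H →ₗ[ℂ] H)))
    {F : Type*} [Fintype F] (e : F → H) (r B ε : ℝ)
    (hr : 0 < r) (hB : 0 < B) (hε0 : 0 ≤ ε) (hε1 : ε < 1)
    (hrange : ∀ k : F, Q (e k) = e k)
    (hnorm : ∀ k : F, ‖e k‖ = r)
    (hbessel : ∀ f : H, (∑ k : F, ‖⟪f, e k⟫‖ ^ 2) ≤ B * ‖f‖ ^ 2)
    (happrox : ∀ k : F, ‖e k - P (e k)‖ ≤ ε * r) :
    ∀ n : ℕ, Module.rank ℂ (LinearMap.range (P : H →ₗ[ℂ] H)) ≤ n →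
      (r ^ 2 / B) * (1 - ε) * (Fintype.card F : ℝ) ≤ n :=
  comparison_core_general P hP_proj hP_sa e r B ε hB hnorm hbessel happrox
end
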